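/- Let x ∈ ℝ^N be nonzero with support T and |T| = k, and set ν_min(x) := (min_{i∈T} |x_i|)/‖x‖₂. Let κ > 0 and μ ∈ (0,1), and let (x̂^l)_{l≥0} be a sequence of k-sparse vectors in ℝ^N satisfying ‖x − x̂^l‖₂ ≤ κ·μ^l·‖x‖₂ for every l ≥ 0. Define ℓ_max := ⌈(log ν_min(x) − log κ)/log μ⌉ + 1. Then for every integer l ≥ ℓ_max the support of x̂^l equals T. -/

import Mathlib

open Finset Matrix

noncomputable def euclidNorm {α : Type*} [Fintype α] (v : α → ℝ) : ℝ :=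
  Real.sqrt (∑ i, (v i) ^ 2)

def restr {N : ℕ} (I : Finset (Fin N)) (x : Fin N → ℝ) : Fin N → ℝ :=
  fun i => if i ∈ I then x i else 0

def sparse {N : ℕ} (k : ℕ) (x : Fin N → ℝ) : Prop :=
  (Finset.univ.filter fun i => x i ≠ 0).card ≤ k

def aRIP {n N : ℕ} (A : Matrix (Fin n) (Fin N) ℝ) (m : ℕ) (L U : ℝ) : Prop :=
  ∀ x : Fin N → ℝ, sparse m x →
    (1 - L) * euclidNorm x ^ 2 ≤ euclidNorm (A.mulVec x) ^ 2 ∧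
      euclidNorm (A.mulVec x) ^ 2 ≤ (1 + U) * euclidNorm x ^ 2

def selects {N : ℕ} (T : Finset (Fin N)) (v : Fin N → ℝ) : Prop :=
  ∀ i ∈ T, ∀ j ∉ T, |v j| ≤ |v i|

def subCols {n N : ℕ} (A : Matrix (Fin n) (Fin N) ℝ) (I : Finset (Fin N)) :
    Matrix (Fin n) I ℝ :=
  fun r c => A r (c : Fin N)

noncomputable def gram {n N : ℕ} (A : Matrix (Fin n) (Fin N) ℝ) (I : Finset (Fin N)) :
    Matrix I I ℝ :=
  (subCols A I)ᵀ * subCols A I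

noncomputable def pinvApply {n N : ℕ} (A : Matrix (Fin n) (Fin N) ℝ) (I : Finset (Fin N))
    (y : Fin n → ℝ) : I → ℝ :=
  ((gram A I)⁻¹ * (subCols A I)ᵀ).mulVec y

noncomputable def pinvVec {n N : ℕ} (A : Matrix (Fin n) (Fin N) ℝ) (I : Finset (Fin N))
    (y : Fin n → ℝ) : Fin N → ℝ :=
  fun i => if h : i ∈ I then pinvApply A I y ⟨i, h⟩ else 0

/-!
Every coordinate error is bounded by the Euclidean error, which for `l ≥ ℓ_max` drops below
`min_{i ∈ T} |x_i|`; hence no entry of `T` can vanish in `x̂^l`. As `x̂^l` has at most `k = |T|`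
nonzero entries, its support is exactly `T`.
-/

lemma abs_le_euclidNorm {α : Type*} [Fintype α] (v : α → ℝ) (i : α) :
    |v i| ≤ euclidNorm v :=
  Real.abs_le_sqrt <| Finset.single_le_sum (f := fun j => v j ^ 2)
    (fun _ _ => sq_nonneg _) (Finset.mem_univ i)

lemma euclidNorm_pos {α : Type*} [Fintype α] {v : α → ℝ} {i : α} (hi : v i ≠ 0) :
    0 < euclidNorm v :=
  (abs_pos.2 hi).trans_le (abs_le_euclidNorm v i)

lemma lt_ciInf_of_finite {ι α : Type*} [ConditionallyCompleteLinearOrder α] [Finite ι] [Nonempty ι]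
    {f : ι → α} {a : α} (h : ∀ i, a < f i) : a < ⨅ i, f i := by
  obtain ⟨i, hi⟩ := exists_eq_ciInf_of_finite (f := f)
  exact hi ▸ h i

lemma mul_pow_lt_of_ceil_lt {κ μ c : ℝ} (hκ : 0 < κ) (hμ0 : 0 < μ) (hμ1 : μ < 1) (hc : 0 < c)
    {l : ℕ} (hl : ⌈(Real.log c - Real.log κ) / Real.log μ⌉ < l) : κ * μ ^ l < c := by
  have hlogμ : Real.log μ < 0 := Real.log_neg hμ0 hμ1
  have hratio : (Real.log c - Real.log κ) / Real.log μ < l :=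
    (Int.le_ceil _).trans_lt (by exact_mod_cast hl)
  have hlog : Real.log (κ * μ ^ l) < Real.log c := by
    rw [Real.log_mul hκ.ne' (pow_pos hμ0 l).ne', Real.log_pow]
    linarith [(div_lt_iff_of_neg hlogμ).1 hratio]
  exact (Real.log_lt_log_iff (by positivity) hc).1 hlog

lemma support_eq_of_subset_of_sparse {N : ℕ} {T : Finset (Fin N)} {y : Fin N → ℝ}
    (hT : ∀ i ∈ T, y i ≠ 0) (hy : sparse T.card y) (i : Fin N) : y i ≠ 0 ↔ i ∈ T := by
  have hsub : T ⊆ Finset.univ.filter fun j => y j ≠ 0 := fun j hj => by simpa using hT j hj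
  have hsupp := (Finset.eq_of_subset_of_card_le hsub hy).symm
  rw [← hsupp]
  simp

theorem stmt6_general {N k : ℕ} (x : Fin N → ℝ)
    (T : Finset (Fin N)) (hT : ∀ i, i ∈ T ↔ x i ≠ 0) (hTcard : T.card = k)
    (κ μ : ℝ) (hκ : 0 < κ) (hμ0 : 0 < μ) (hμ1 : μ < 1)
    (xh : ℕ → Fin N → ℝ) (hsp : ∀ l, sparse k (xh l))
    (hbd : ∀ l : ℕ, euclidNorm (fun i => x i - xh l i) ≤ κ * μ ^ l * euclidNorm x) :
    ∀ l : ℕ,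
      (⌈(Real.log ((⨅ i : T, |x i.1|) / euclidNorm x) - Real.log κ) / Real.log μ⌉ + 1 : ℤ)
        ≤ (l : ℤ) →
      ∀ i, xh l i ≠ 0 ↔ i ∈ T := by
  intro l hl
  refine support_eq_of_subset_of_sparse (fun i hi => ?_) (hTcard ▸ hsp l)
  have : Nonempty T := ⟨⟨i, hi⟩⟩
  set ν := ⨅ j : T, |x j.1|
  have hν : 0 < ν := lt_ciInf_of_finite fun j => abs_pos.2 ((hT j).1 j.2)
  have hx : 0 < euclidNorm x := euclidNorm_pos ((hT i).1 hi)
  have hdecay : κ * μ ^ l < ν / euclidNorm x :=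
    mul_pow_lt_of_ceil_lt hκ hμ0 hμ1 (div_pos hν hx) (by omega)
  intro hzero
  have hsmall : |x i| < ν :=
    calc |x i| = |x i - xh l i| := by rw [hzero, sub_zero]
      _ ≤ euclidNorm (fun j => x j - xh l j) := abs_le_euclidNorm (fun j => x j - xh l j) i
      _ ≤ κ * μ ^ l * euclidNorm x := hbd l
      _ < ν := (lt_div_iff₀ hx).1 hdecay
  exact hsmall.not_ge (ciInf_le (Finite.bddBelow_range _) (⟨i, hi⟩ : T))

theorem stmt6 {N k : ℕ} (x : Fin N → ℝ) (hx : x ≠ 0)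
    (T : Finset (Fin N)) (hT : ∀ i, i ∈ T ↔ x i ≠ 0) (hTcard : T.card = k)
    (κ μ : ℝ) (hκ : 0 < κ) (hμ0 : 0 < μ) (hμ1 : μ < 1)
    (xh : ℕ → Fin N → ℝ) (hsp : ∀ l, sparse k (xh l))
    (hbd : ∀ l : ℕ, euclidNorm (fun i => x i - xh l i) ≤ κ * μ ^ l * euclidNorm x) :
    ∀ l : ℕ,
      (⌈(Real.log ((⨅ i : T, |x i.1|) / euclidNorm x) - Real.log κ) / Real.log μ⌉ + 1 : ℤ)
        ≤ (l : ℤ) →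
      ∀ i, xh l i ≠ 0 ↔ i ∈ T :=
  stmt6_general x T hT hTcard κ μ hκ hμ0 hμ1 xh hsp hbd
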